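/- arXiv:2203.13989 — 4 statements merged into one kernel-verified Lean document; each statement's English description precedes it below -/
import Mathlib

section
/- Let G be a unimodular locally compact group, K a compact subgroup, φ a continuous strictly positive function on G, and u a continuous function on G. Then the following are equivalent: (a) there is C ≥ 0 with |∫_G u(x) f(x) dx| ≤ C ∫_G (𝒜f)(x) φ(x) dx for all compactly supported continuous f; (b) (𝒜u)(x) ≤ C φ(x) for all x ∈ G, where φ is assumed K-bi-invariant. -/
open MeasureTheory

noncomputable section

variable {G : Type*} [Group G] [TopologicalSpace G] [IsTopologicalGroup G]
  [MeasurableSpace G] [BorelSpace G] [LocallyCompactSpace G]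

/-- Root-mean-square average over a compact subgroup `K` (normalized Haar measure `ν`). -/
def rmsAvg (K : Subgroup G) (ν : Measure K) (u : G → ℂ) (x : G) : ℝ :=
  Real.sqrt (∫ k : K, ∫ k' : K, ‖u (↑k * x * ↑k')‖ ^ 2 ∂ν ∂ν)

/-!
Write `A w x = ∫∫ w (k x k') dk dk'`, so that `𝒜u = √(A ‖u‖²)`. Because `μ` is both left and right
invariant, `∫ A h = ∫ h` for compactly supported continuous `h`, and `A (w c) = (A w) c` when `c`
is `K`-bi-invariant.

(b) ⇒ (a): `‖∫ u f‖ = ‖∫ A (u f)‖ ≤ ∫ 𝒜u 𝒜f` by Cauchy–Schwarz on `K × K`.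

(a) ⇒ (b): if `𝒜u x₀ > C φ x₀`, take a bump `ψ ≥ 0` at `x₀` supported where
`D = 𝒜u² - C 𝒜u φ > 0`, and test (a) against `f = ū · Aψ`. Then `𝒜f = 𝒜u · Aψ` and
`∫ u f = ∫ ‖u‖² Aψ = ∫ 𝒜u² Aψ`, so (a) says `∫ ψ D = ∫ Aψ · D ≤ 0`, although `ψ D ≥ 0` is continuous
and positive at `x₀`.
-/

open Function Set ComplexConjugate
open scoped ENNReal Pointwise

/-- No countability is assumed on `X`, so instead of dominated convergence we use that the integral
is Lipschitz on `C(Z, E)`. -/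
theorem continuous_integral_of_compactSpace {X Z E : Type*} [TopologicalSpace X]
    [TopologicalSpace Z] [CompactSpace Z] [MeasurableSpace Z] [OpensMeasurableSpace Z]
    [NormedAddCommGroup E] [NormedSpace ℝ E] (ρ : Measure Z) [IsFiniteMeasure ρ]
    {F : X → Z → E} (hF : Continuous (uncurry F)) :
    Continuous fun x => ∫ z, F x z ∂ρ := by
  have hint (g : C(Z, E)) : Integrable g ρ :=
    g.continuous.integrable_of_hasCompactSupport (.of_compactSpace _)
  have hL : LipschitzWith (ρ.real univ).toNNReal fun g : C(Z, E) => ∫ z, g z ∂ρ := by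
    refine LipschitzWith.of_dist_le_mul fun g h => ?_
    rw [dist_eq_norm, ← integral_sub (hint g) (hint h), Real.coe_toNNReal _ measureReal_nonneg,
      mul_comm]
    refine norm_integral_le_of_norm_le_const (ae_of_all _ fun z => ?_)
    rw [← dist_eq_norm]
    exact ContinuousMap.dist_apply_le_dist z
  exact hL.continuous.comp (ContinuousMap.curry ⟨uncurry F, hF⟩).continuous

/-- The product σ-algebra on `X × Y` need not contain the open sets; compactness of the support is
what makes `f` measurable. -/
theorem Continuous.memLp_prod_of_compactSpace {X Y E : Type*}
    [TopologicalSpace X] [CompactSpace X] [MeasurableSpace X] [OpensMeasurableSpace X]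
    [TopologicalSpace Y] [CompactSpace Y] [MeasurableSpace Y] [OpensMeasurableSpace Y]
    [NormedAddCommGroup E] {f : X × Y → E} (hf : Continuous f) (ρ : Measure (X × Y))
    [IsFiniteMeasure ρ] (p : ℝ≥0∞) : MemLp f p ρ := by
  have hfs := HasCompactSupport.of_compactSpace f
  obtain ⟨C, hC⟩ := hf.bounded_above_of_compact_support hfs
  exact .of_bound (hfs.stronglyMeasurable_of_prod hf).aestronglyMeasurable C (ae_of_all _ hC)

theorem HasCompactSupport.uncurry_of_compactSpace {X Z β : Type*} [TopologicalSpace X]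
    [R1Space X] [TopologicalSpace Z] [CompactSpace Z] [R1Space Z] [Zero β] {F : X → Z → β}
    {S : Set X} (hS : IsCompact S) (hF : ∀ x ∉ S, ∀ z, F x z = 0) :
    HasCompactSupport (uncurry F) :=
  .intro (hS.prod isCompact_univ) fun ⟨x, z⟩ hxz => hF x (fun hx => hxz ⟨hx, mem_univ z⟩) z

theorem norm_integral_mul_le_sqrt_mul_sqrt {α A : Type*} [MeasurableSpace α] {μ : Measure α}
    [NormedDivisionRing A] [NormedSpace ℝ A] {f g : α → A} (hf : MemLp f 2 μ)
    (hg : MemLp g 2 μ) :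
    ‖∫ a, f a * g a ∂μ‖ ≤ √(∫ a, ‖f a‖ ^ 2 ∂μ) * √(∫ a, ‖g a‖ ^ 2 ∂μ) := by
  have h := integral_mul_norm_le_Lp_mul_Lq Real.HolderConjugate.two_two
    (by simpa using hf) (by simpa using hg)
  simp only [Real.rpow_two, ← Real.sqrt_eq_rpow] at h
  calc ‖∫ a, f a * g a ∂μ‖ ≤ ∫ a, ‖f a * g a‖ ∂μ := norm_integral_le_integral_norm _
    _ = ∫ a, ‖f a‖ * ‖g a‖ ∂μ := by simp_rw [norm_mul]
    _ ≤ _ := h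

theorem exists_integral_mul_pos {X : Type*} [TopologicalSpace X] [RegularSpace X]
    [LocallyCompactSpace X] [MeasurableSpace X] [OpensMeasurableSpace X] (μ : Measure X)
    [IsFiniteMeasureOnCompacts μ] [μ.IsOpenPosMeasure] {D : X → ℝ} (hD : Continuous D) {x₀ : X}
    (hx₀ : 0 < D x₀) :
    ∃ ψ : X → ℝ, Continuous ψ ∧ HasCompactSupport ψ ∧ 0 ≤ ψ ∧ 0 < ∫ x, ψ x * D x ∂μ := by
  obtain ⟨ψ, hψx₀, hψD, hψs, hψ01⟩ := exists_continuous_one_zero_of_isCompact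
    isCompact_singleton (isOpen_lt continuous_const hD).isClosed_compl
    (disjoint_singleton_left.2 fun h => h hx₀)
  refine ⟨ψ, ψ.continuous, hψs, fun x => (hψ01 x).1, ?_⟩
  refine (ψ.continuous.mul hD).integral_pos_of_hasCompactSupport_nonneg_nonzero hψs.mul_right
    (fun x => ?_) (x := x₀) (by simp [hψx₀ rfl, hx₀.ne'])
  by_cases hx : 0 < D x
  · exact mul_nonneg (hψ01 x).1 hx.le
  · simp [hψD hx]

theorem isMulRightInvariant_of_isProbabilityMeasure {H : Type*} [Group H] [TopologicalSpace H]
    [IsTopologicalGroup H] [CompactSpace H] [MeasurableSpace H] [BorelSpace H] (ν : Measure H)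
    [ν.IsHaarMeasure] [IsProbabilityMeasure ν] : ν.IsMulRightInvariant where
  map_mul_right_eq_self g :=
    have := Measure.isProbabilityMeasure_map (μ := ν) (measurable_mul_const g).aemeasurable
    Measure.isHaarMeasure_eq_of_isProbabilityMeasure _ _

section BiAverage

omit [LocallyCompactSpace G]

variable (K : Subgroup G) (ν : Measure K) {E : Type*} [NormedAddCommGroup E] [NormedSpace ℝ E]

def biAvg (w : G → E) (x : G) : E :=
  ∫ k : K, ∫ k' : K, w (↑k * x * ↑k') ∂ν ∂ν

def IsBiInvariant {α : Type*} (c : G → α) : Prop :=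
  ∀ (k k' : K) (x : G), c (↑k * x * ↑k') = c x

section Algebra

omit [TopologicalSpace G] [IsTopologicalGroup G] [BorelSpace G]

theorem rmsAvg_eq_sqrt_biAvg (v : G → ℂ) (x : G) :
    rmsAvg K ν v x = √(biAvg K ν (fun y => ‖v y‖ ^ 2) x) :=
  rfl

theorem rmsAvg_nonneg (v : G → ℂ) (x : G) : 0 ≤ rmsAvg K ν v x :=
  Real.sqrt_nonneg _

theorem biAvg_nonneg {w : G → ℝ} (hw : 0 ≤ w) (x : G) : 0 ≤ biAvg K ν w x :=
  integral_nonneg fun _ => integral_nonneg fun _ => hw _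

theorem sq_rmsAvg (v : G → ℂ) (x : G) :
    rmsAvg K ν v x ^ 2 = biAvg K ν (fun y => ‖v y‖ ^ 2) x :=
  Real.sq_sqrt (biAvg_nonneg K ν (fun y => sq_nonneg ‖v y‖) x)

theorem biAvg_mul_of_isBiInvariant {w c : G → ℝ} (hc : IsBiInvariant K c) (x : G) :
    biAvg K ν (fun y => w y * c y) x = biAvg K ν w x * c x := by
  simp only [biAvg, hc _ _ x, integral_mul_const]

theorem rmsAvg_mul_ofReal {c : G → ℝ} (hc : IsBiInvariant K c) (v : G → ℂ) (x : G) :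
    rmsAvg K ν (fun y => v y * c y) x = rmsAvg K ν v x * |c x| := by
  have hc2 : IsBiInvariant K fun y => c y ^ 2 := fun k k' y => by simp only [hc k k' y]
  simp only [rmsAvg_eq_sqrt_biAvg, norm_mul, Complex.norm_real, Real.norm_eq_abs, mul_pow,
    sq_abs, biAvg_mul_of_isBiInvariant K ν hc2, Real.sqrt_mul (biAvg_nonneg K ν
      (fun _ => sq_nonneg _) x), Real.sqrt_sq_eq_abs]

theorem rmsAvg_conj (v : G → ℂ) : rmsAvg K ν (fun y => conj (v y)) = rmsAvg K ν v := by
  funext x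
  simp only [rmsAvg, Complex.norm_conj]

end Algebra

theorem isBiInvariant_biAvg [ν.IsMulLeftInvariant] [ν.IsMulRightInvariant] (w : G → E) :
    IsBiInvariant K (biAvg K ν w) := fun k₀ k₀' x => by
  have hmul (k k' : K) : (k * (k₀ * x * k₀') * k' : G) = ↑(k * k₀) * x * ↑(k₀' * k') := by
    push_cast; group
  calc biAvg K ν w (k₀ * x * k₀')
      = ∫ k : K, ∫ k' : K, w (↑(k * k₀) * x * ↑(k₀' * k')) ∂ν ∂ν := by simp only [biAvg, hmul]
    _ = ∫ k : K, ∫ k' : K, w (↑(k * k₀) * x * ↑k') ∂ν ∂ν := by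
      congr 1 with k
      exact integral_mul_left_eq_self (μ := ν) (fun k' : K => w (↑(k * k₀) * x * ↑k')) k₀'
    _ = biAvg K ν w x :=
      integral_mul_right_eq_self (μ := ν) (fun k : K => ∫ k', w (↑k * x * ↑k') ∂ν) k₀

theorem isBiInvariant_rmsAvg [ν.IsMulLeftInvariant] [ν.IsMulRightInvariant] (v : G → ℂ) :
    IsBiInvariant K (rmsAvg K ν v) := fun k k' x => by
  simp only [rmsAvg_eq_sqrt_biAvg, isBiInvariant_biAvg K ν _ k k' x]

omit [IsTopologicalGroup G] [MeasurableSpace G] [BorelSpace G] in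
theorem apply_mul_mul_eq_zero_of_notMem {β : Type*} [Zero β] {w : G → β} {x : G}
    (hx : x ∉ (K : Set G) * tsupport w * (K : Set G)) (k k' : K) : w (k * x * k') = 0 := by
  by_contra hne
  have hx' : x = ↑k⁻¹ * (k * x * k') * ↑k'⁻¹ := by push_cast; group
  exact hx (hx' ▸ mul_mem_mul (mul_mem_mul (k⁻¹).2 (subset_tsupport w hne)) (k'⁻¹).2)

variable [CompactSpace K]

omit [MeasurableSpace G] [BorelSpace G] in
theorem isCompact_mul_tsupport_mul {β : Type*} [Zero β] {w : G → β} (hw : HasCompactSupport w) :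
    IsCompact ((K : Set G) * tsupport w * (K : Set G)) :=
  have hK : IsCompact (K : Set G) := isCompact_iff_compactSpace.2 ‹_›
  (hK.mul hw).mul hK

omit [BorelSpace G] in
theorem HasCompactSupport.biAvg {w : G → E} (hw : HasCompactSupport w) :
    HasCompactSupport (biAvg K ν w) :=
  .intro (isCompact_mul_tsupport_mul K hw) fun x hx => by
    simp [_root_.biAvg, apply_mul_mul_eq_zero_of_notMem K hx]

theorem continuous_biAvg [IsFiniteMeasure ν] {w : G → E} (hw : Continuous w) :
    Continuous (biAvg K ν w) :=
  continuous_integral_of_compactSpace ν (F := fun x (k : K) => ∫ k' : K, w (k * x * k') ∂ν) <|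
    continuous_integral_of_compactSpace ν (F := fun (q : G × K) (k' : K) => w (q.2 * q.1 * k'))
      (by fun_prop)

theorem continuous_rmsAvg [IsFiniteMeasure ν] {v : G → ℂ} (hv : Continuous v) :
    Continuous (rmsAvg K ν v) :=
  (continuous_biAvg K ν (hv.norm.pow 2)).sqrt

omit [BorelSpace G] in
theorem HasCompactSupport.rmsAvg {v : G → ℂ} (hv : HasCompactSupport v) :
    HasCompactSupport (rmsAvg K ν v) :=
  ((hv.norm.comp_left (zero_pow two_ne_zero)).biAvg K ν).comp_left Real.sqrt_zero

theorem biAvg_eq_integral_prod [IsFiniteMeasure ν] {w : G → E} (hw : Continuous w) (x : G) :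
    biAvg K ν w x = ∫ p : K × K, w (p.1 * x * p.2) ∂ν.prod ν :=
  integral_integral <| memLp_one_iff_integrable.1 <|
    Continuous.memLp_prod_of_compactSpace (by fun_prop) _ _

theorem norm_biAvg_mul_le [IsFiniteMeasure ν] {u f : G → ℂ} (hu : Continuous u)
    (hf : Continuous f) (x : G) :
    ‖biAvg K ν (fun y => u y * f y) x‖ ≤ rmsAvg K ν u x * rmsAvg K ν f x := by
  rw [rmsAvg_eq_sqrt_biAvg, rmsAvg_eq_sqrt_biAvg,
    biAvg_eq_integral_prod K ν (w := fun y => u y * f y) (hu.mul hf),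
    biAvg_eq_integral_prod K ν (w := fun y => ‖u y‖ ^ 2) (hu.norm.pow 2),
    biAvg_eq_integral_prod K ν (w := fun y => ‖f y‖ ^ 2) (hf.norm.pow 2)]
  exact norm_integral_mul_le_sqrt_mul_sqrt
    (Continuous.memLp_prod_of_compactSpace (by fun_prop) _ _)
    (Continuous.memLp_prod_of_compactSpace (by fun_prop) _ _)

theorem integral_biAvg (μ : Measure G) [μ.IsMulLeftInvariant] [μ.IsMulRightInvariant]
    [IsFiniteMeasureOnCompacts μ] [IsProbabilityMeasure ν] [CompleteSpace E] {h : G → E}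
    (hc : Continuous h) (hs : HasCompactSupport h) : ∫ x, biAvg K ν h x ∂μ = ∫ x, h x ∂μ := by
  have hS := isCompact_mul_tsupport_mul K hs
  have hswap (k : K) :
      ∫ x, ∫ k' : K, h (k * x * k') ∂ν ∂μ = ∫ k' : K, ∫ x, h (k * x * k') ∂μ ∂ν :=
    integral_integral_swap_of_hasCompactSupport (by fun_prop) <|
      .uncurry_of_compactSpace hS fun x hx k' => apply_mul_mul_eq_zero_of_notMem K hx k k'
  have htrans (a b : G) : ∫ x, h (a * x * b) ∂μ = ∫ x, h x ∂μ :=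
    (integral_mul_left_eq_self (fun y => h (y * b)) a).trans (integral_mul_right_eq_self h b)
  calc ∫ x, biAvg K ν h x ∂μ = ∫ k : K, ∫ x, ∫ k' : K, h (k * x * k') ∂ν ∂μ ∂ν :=
        integral_integral_swap_of_hasCompactSupport
          (continuous_integral_of_compactSpace ν (F := fun (p : G × K) (k' : K) =>
            h (p.2 * p.1 * k')) (by fun_prop))
          (.uncurry_of_compactSpace hS fun x hx k => by
            simp [apply_mul_mul_eq_zero_of_notMem K hx])
    _ = ∫ x, h x ∂μ := by simp only [hswap, htrans, integral_const, probReal_univ, one_smul]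

theorem integral_mul_eq_integral_biAvg_mul (μ : Measure G) [μ.IsMulLeftInvariant]
    [μ.IsMulRightInvariant] [IsFiniteMeasureOnCompacts μ] [IsProbabilityMeasure ν]
    {w c : G → ℝ} (hw : Continuous w) (hc : Continuous c) (hc_bi : IsBiInvariant K c)
    (hs : HasCompactSupport fun y => w y * c y) :
    ∫ x, w x * c x ∂μ = ∫ x, biAvg K ν w x * c x ∂μ := by
  rw [← integral_biAvg K ν μ (h := fun y => w y * c y) (hw.mul hc) hs]
  simp only [biAvg_mul_of_isBiInvariant K ν hc_bi]

theorem norm_integral_mul_le_of_rmsAvg_le (μ : Measure G) [μ.IsMulLeftInvariant]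
    [μ.IsMulRightInvariant] [IsFiniteMeasureOnCompacts μ] [IsProbabilityMeasure ν]
    {φ : G → ℝ} (hφ : Continuous φ) {u : G → ℂ} (hu : Continuous u) {C : ℝ}
    (hC : ∀ x, rmsAvg K ν u x ≤ C * φ x) {f : G → ℂ} (hf : Continuous f)
    (hfs : HasCompactSupport f) :
    ‖∫ x, u x * f x ∂μ‖ ≤ C * ∫ x, rmsAvg K ν f x * φ x ∂μ := by
  have hAf := continuous_rmsAvg K ν hf
  have hAfs := hfs.rmsAvg K ν
  calc ‖∫ x, u x * f x ∂μ‖ = ‖∫ x, biAvg K ν (fun y => u y * f y) x ∂μ‖ := by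
        rw [integral_biAvg K ν μ (h := fun y => u y * f y) (hu.mul hf) hfs.mul_left]
    _ ≤ ∫ x, rmsAvg K ν u x * rmsAvg K ν f x ∂μ :=
        norm_integral_le_of_norm_le
          (((continuous_rmsAvg K ν hu).mul hAf).integrable_of_hasCompactSupport hAfs.mul_left)
          (ae_of_all _ (norm_biAvg_mul_le K ν hu hf))
    _ ≤ ∫ x, C * φ x * rmsAvg K ν f x ∂μ :=
        integral_mono
          (((continuous_rmsAvg K ν hu).mul hAf).integrable_of_hasCompactSupport hAfs.mul_left)
          (((continuous_const.mul hφ).mul hAf).integrable_of_hasCompactSupport hAfs.mul_left)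
          fun x => mul_le_mul_of_nonneg_right (hC x) (rmsAvg_nonneg K ν f x)
    _ = C * ∫ x, rmsAvg K ν f x * φ x ∂μ := by
        rw [← integral_const_mul]
        congr 1 with x
        ring

theorem integral_sq_rmsAvg_mul_le (μ : Measure G) [μ.IsMulLeftInvariant]
    [μ.IsMulRightInvariant] [IsFiniteMeasureOnCompacts μ] [IsProbabilityMeasure ν]
    {φ : G → ℝ} {u : G → ℂ} (hu : Continuous u) {C : ℝ}
    (h : ∀ f : G → ℂ, Continuous f → HasCompactSupport f →
      ‖∫ x, u x * f x ∂μ‖ ≤ C * ∫ x, rmsAvg K ν f x * φ x ∂μ)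
    {g : G → ℝ} (hg : Continuous g) (hgs : HasCompactSupport g) (hg_bi : IsBiInvariant K g)
    (hg_nonneg : ∀ x, 0 ≤ g x) :
    ∫ x, rmsAvg K ν u x ^ 2 * g x ∂μ ≤ C * ∫ x, rmsAvg K ν u x * g x * φ x ∂μ := by
  set f : G → ℂ := fun y => conj (u y) * g y
  have hAf : rmsAvg K ν f = fun y => rmsAvg K ν u y * g y := funext fun y => by
    rw [rmsAvg_mul_ofReal K ν hg_bi, rmsAvg_conj, abs_of_nonneg (hg_nonneg y)]
  have hpair : ∫ x, u x * f x ∂μ = ((∫ x, ‖u x‖ ^ 2 * g x ∂μ : ℝ) : ℂ) := by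
    rw [← integral_complex_ofReal]
    congr 1 with x
    rw [← mul_assoc, Complex.mul_conj, Complex.normSq_eq_norm_sq]
    push_cast
    ring
  have hsq : ∫ x, ‖u x‖ ^ 2 * g x ∂μ = ∫ x, rmsAvg K ν u x ^ 2 * g x ∂μ := by
    rw [integral_mul_eq_integral_biAvg_mul K ν μ (w := fun x => ‖u x‖ ^ 2) (hu.norm.pow 2) hg
      hg_bi hgs.mul_left]
    simp only [sq_rmsAvg]
  have htest := h f (by fun_prop) (hgs.comp_left Complex.ofReal_zero).mul_left
  rw [hpair, Complex.norm_real, Real.norm_eq_abs, hAf, hsq] at htest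
  exact (le_abs_self _).trans htest

theorem rmsAvg_le_of_norm_integral_mul_le [LocallyCompactSpace G] (μ : Measure G)
    [μ.IsHaarMeasure] [μ.IsMulRightInvariant] [IsProbabilityMeasure ν] [ν.IsMulLeftInvariant]
    [ν.IsMulRightInvariant] {φ : G → ℝ} (hφ : Continuous φ) (hφ_nonneg : ∀ x, 0 ≤ φ x)
    (hφ_bi : IsBiInvariant K φ) {u : G → ℂ} (hu : Continuous u) {C : ℝ} (hC : 0 ≤ C)
    (h : ∀ f : G → ℂ, Continuous f → HasCompactSupport f →
      ‖∫ x, u x * f x ∂μ‖ ≤ C * ∫ x, rmsAvg K ν f x * φ x ∂μ) (x₀ : G) :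
    rmsAvg K ν u x₀ ≤ C * φ x₀ := by
  by_contra! hlt
  set A := rmsAvg K ν u
  have hA : Continuous A := continuous_rmsAvg K ν hu
  set D : G → ℝ := fun y => A y ^ 2 - C * (A y * φ y)
  have hD : Continuous D := by fun_prop
  have hD_bi : IsBiInvariant K D := fun k k' y => by
    simp only [D, A, isBiInvariant_rmsAvg K ν u k k' y, hφ_bi k k' y]
  have hDx₀ : 0 < D x₀ := by
    have hAx₀ : 0 < A x₀ := (mul_nonneg hC (hφ_nonneg x₀)).trans_lt hlt
    simp only [D]
    nlinarith
  obtain ⟨ψ, hψ, hψs, hψ_nonneg, hpos⟩ := exists_integral_mul_pos μ hD hDx₀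
  set g := biAvg K ν ψ
  have hg : Continuous g := continuous_biAvg K ν hψ
  have hgs : HasCompactSupport g := hψs.biAvg K ν
  have htest := integral_sq_rmsAvg_mul_le K ν μ hu h hg hgs (isBiInvariant_biAvg K ν ψ)
    (biAvg_nonneg K ν hψ_nonneg)
  have hint₁ : Integrable (fun y => A y ^ 2 * g y) μ :=
    ((hA.pow 2).mul hg).integrable_of_hasCompactSupport hgs.mul_left
  have hint₂ : Integrable (fun y => A y * g y * φ y) μ :=
    ((hA.mul hg).mul hφ).integrable_of_hasCompactSupport hgs.mul_left.mul_right
  have hgD : ∫ y, g y * D y ∂μ = ∫ y, A y ^ 2 * g y ∂μ - C * ∫ y, A y * g y * φ y ∂μ := by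
    rw [← integral_const_mul, ← integral_sub hint₁ (hint₂.const_mul C)]
    congr 1 with y
    ring
  rw [integral_mul_eq_integral_biAvg_mul K ν μ hψ hD hD_bi hψs.mul_right, hgD] at hpos
  linarith

end BiAverage

/-- **duality.** For a continuous function `u` and a continuous strictly positive
`K`-bi-invariant `φ`, the following are equivalent: (a) there is `C ≥ 0` with
`|∫ u f| ≤ C ∫ 𝒜f · φ` for all compactly supported continuous `f`; (b) there is `C ≥ 0` with
`𝒜u ≤ C φ` pointwise. -/
theorem duality_rmsAvg (μ : Measure G) [μ.IsHaarMeasure] [μ.IsMulRightInvariant]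
    (K : Subgroup G) [CompactSpace K] (ν : Measure K) [ν.IsHaarMeasure]
    [IsProbabilityMeasure ν]
    (φ : G → ℝ) (hφcont : Continuous φ) (hφpos : ∀ x, 0 < φ x)
    (hφbi : ∀ (k : K) (x : G), φ (↑k * x) = φ x ∧ φ (x * ↑k) = φ x)
    (u : G → ℂ) (hu : Continuous u) :
    (∃ C : ℝ, 0 ≤ C ∧ ∀ f : G → ℂ, Continuous f → HasCompactSupport f →
        ‖∫ x, u x * f x ∂μ‖ ≤ C * ∫ x, rmsAvg K ν f x * φ x ∂μ) ↔
      (∃ C : ℝ, 0 ≤ C ∧ ∀ x : G, rmsAvg K ν u x ≤ C * φ x) := by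
  have := isMulRightInvariant_of_isProbabilityMeasure ν
  have hφ_bi : IsBiInvariant K φ := fun k k' x => by rw [(hφbi k' _).2, (hφbi k x).1]
  constructor
  · rintro ⟨C, hC, h⟩
    exact ⟨C, hC, rmsAvg_le_of_norm_integral_mul_le K ν μ hφcont (fun x => (hφpos x).le) hφ_bi
      hu hC h⟩
  · rintro ⟨C, hC, h⟩
    exact ⟨C, hC, fun f hf hfs => norm_integral_mul_le_of_rmsAvg_le K ν μ hφcont hu h hf hfs⟩

end
end

section
/- Let T ≥ 0 be a bounded self-adjoint operator on a Hilbert space H and suppose there exist a vector ξ ∈ H and constants C ≥ 0, r ≥ 0 such that ⟨Tⁿ ξ, ξ⟩ ≤ C rⁿ for all n ≥ 1, and ξ is a cyclic vector for T (the closed span of {Tⁿξ : n ≥ 0} is H). Then ‖T‖ ≤ r. -/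
/-!
For self-adjoint `T`, Cauchy–Schwarz gives `‖T x‖² = ⟨T² x, x⟩ ≤ ‖T² x‖ ‖x‖`, and iterating,
`‖T x‖^(2^k) ≤ ‖T^(2^k) x‖ ‖x‖^(2^k - 1)`. Hence a bound `‖Tⁿ x‖ ≤ D rⁿ` yields
`‖T x‖^(2^k) ≤ (D / ‖x‖) (r ‖x‖)^(2^k)`, and after taking `2^k`-th roots the constant disappears
as `k → ∞`: `‖T x‖ ≤ r ‖x‖`.
Such bounds hold for `ξ` by the even moments `⟨T²ⁿ ξ, ξ⟩ = ‖Tⁿ ξ‖²`, and they are stable under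
sums, scalar multiples and applying `T`, so they hold on the span of the orbit of `ξ`; by density
and continuity `‖T x‖ ≤ r ‖x‖` everywhere.
-/

open scoped ComplexInnerProductSpace

noncomputable section

variable {H : Type*} [NormedAddCommGroup H] [InnerProductSpace ℂ H] [CompleteSpace H]

open Filter Topology RCLike

theorem le_of_frequently_pow_le_mul_pow {a b D : ℝ} (hb : 0 ≤ b)
    (h : ∃ᶠ n in atTop, a ^ n ≤ D * b ^ n) : a ≤ b := by
  by_contra! hba
  have ha : 0 < a := hb.trans_lt hba
  have hlim : Tendsto (fun n : ℕ => D * (b / a) ^ n) atTop (𝓝 0) := by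
    simpa using (tendsto_pow_atTop_nhds_zero_of_lt_one (div_nonneg hb ha.le)
      ((div_lt_one ha).2 hba)).const_mul D
  obtain ⟨n, hn, hlt⟩ := (h.and_eventually (hlim.eventually (gt_mem_nhds one_pos))).exists
  rw [div_pow, mul_div_assoc', div_lt_one (pow_pos ha n)] at hlt
  exact hn.not_gt hlt

namespace ContinuousLinearMap

variable {𝕜 E : Type*} [NormedField 𝕜] [NormedAddCommGroup E] [NormedSpace 𝕜 E]

def geomGrowthSubmodule (T : E →L[𝕜] E) (r : ℝ) : Submodule 𝕜 E where
  carrier := {x | ∃ D : ℝ, ∀ n : ℕ, ‖(T ^ n) x‖ ≤ D * r ^ n}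
  zero_mem' := ⟨0, fun n => by simp⟩
  add_mem' := by
    rintro x y ⟨Dx, hx⟩ ⟨Dy, hy⟩
    refine ⟨Dx + Dy, fun n => ?_⟩
    rw [map_add, add_mul]
    exact (norm_add_le _ _).trans (add_le_add (hx n) (hy n))
  smul_mem' := by
    rintro c x ⟨D, hx⟩
    refine ⟨‖c‖ * D, fun n => ?_⟩
    rw [map_smul, norm_smul, mul_assoc]
    exact mul_le_mul_of_nonneg_left (hx n) (norm_nonneg c)

theorem pow_apply_mem_geomGrowthSubmodule {T : E →L[𝕜] E} {r : ℝ} {x : E}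
    (hx : x ∈ T.geomGrowthSubmodule r) (m : ℕ) : (T ^ m) x ∈ T.geomGrowthSubmodule r := by
  obtain ⟨D, hD⟩ := hx
  refine ⟨D * r ^ m, fun n => ?_⟩
  rw [← mul_apply_eq_comp (T ^ n), ← pow_add, mul_assoc, ← pow_add, add_comm m]
  exact hD (n + m)

end ContinuousLinearMap

namespace IsSelfAdjoint

open ContinuousLinearMap

variable {𝕜 E : Type*} [RCLike 𝕜] [NormedAddCommGroup E] [InnerProductSpace 𝕜 E]
  [CompleteSpace E] {T : E →L[𝕜] E}

theorem norm_pow_apply_sq (hT : IsSelfAdjoint T) (n : ℕ) (x : E) :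
    ‖(T ^ n) x‖ ^ 2 = re (inner 𝕜 ((T ^ (2 * n)) x) x) := by
  rw [apply_norm_sq_eq_inner_adjoint_left, (hT.pow n).adjoint_eq, two_mul, pow_add]
  rfl

theorem norm_apply_sq_le (hT : IsSelfAdjoint T) (x : E) : ‖T x‖ ^ 2 ≤ ‖T (T x)‖ * ‖x‖ := by
  rw [apply_norm_sq_eq_inner_adjoint_left, hT.adjoint_eq]
  exact re_inner_le_norm (T (T x)) x

theorem norm_apply_pow_two_pow_le (hT : IsSelfAdjoint T) (x : E) (k : ℕ) :
    ‖T x‖ ^ 2 ^ k ≤ ‖(T ^ 2 ^ k) x‖ * ‖x‖ ^ (2 ^ k - 1) := by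
  induction k with
  | zero => simp
  | succ k ih =>
    have hexp : 2 ^ (k + 1) - 1 = 2 * (2 ^ k - 1) + 1 := by
      have := Nat.one_le_two_pow (n := k); rw [pow_succ]; omega
    calc ‖T x‖ ^ 2 ^ (k + 1) = (‖T x‖ ^ 2 ^ k) ^ 2 := by rw [pow_succ, pow_mul]
      _ ≤ (‖(T ^ 2 ^ k) x‖ * ‖x‖ ^ (2 ^ k - 1)) ^ 2 := by gcongr
      _ = ‖(T ^ 2 ^ k) x‖ ^ 2 * ‖x‖ ^ (2 * (2 ^ k - 1)) := by ring
      _ ≤ ‖(T ^ 2 ^ k) ((T ^ 2 ^ k) x)‖ * ‖x‖ * ‖x‖ ^ (2 * (2 ^ k - 1)) := by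
          gcongr; exact (hT.pow _).norm_apply_sq_le x
      _ = ‖(T ^ 2 ^ (k + 1)) x‖ * ‖x‖ ^ (2 ^ (k + 1) - 1) := by
          rw [← mul_apply_eq_comp (T ^ 2 ^ k), ← pow_add, ← two_mul, ← pow_succ', hexp, pow_succ]
          ring

theorem norm_apply_le_of_mem_geomGrowthSubmodule (hT : IsSelfAdjoint T) {r : ℝ} (hr : 0 ≤ r)
    {x : E} (hx : x ∈ T.geomGrowthSubmodule r) : ‖T x‖ ≤ r * ‖x‖ := by
  obtain ⟨D, hD⟩ := hx
  rcases (norm_nonneg x).eq_or_lt with hx0 | hx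
  · simp [norm_eq_zero.1 hx0.symm]
  refine le_of_frequently_pow_le_mul_pow (by positivity) (D := D / ‖x‖) <|
    (tendsto_pow_atTop_atTop_of_one_lt one_lt_two).frequently (Frequently.of_forall fun k => ?_)
  calc ‖T x‖ ^ 2 ^ k ≤ ‖(T ^ 2 ^ k) x‖ * ‖x‖ ^ (2 ^ k - 1) := hT.norm_apply_pow_two_pow_le x k
    _ ≤ D * r ^ 2 ^ k * ‖x‖ ^ (2 ^ k - 1) := by gcongr; exact hD _
    _ = D / ‖x‖ * (r * ‖x‖) ^ 2 ^ k := by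
      rw [mul_pow, ← pow_sub_one_mul (pow_ne_zero k two_ne_zero) ‖x‖]
      field_simp

theorem mem_geomGrowthSubmodule_of_re_inner_pow_le (hT : IsSelfAdjoint T) {C r : ℝ} (hr : 0 ≤ r)
    {x : E} (h : ∀ n : ℕ, 1 ≤ n → re (inner 𝕜 ((T ^ n) x) x) ≤ C * r ^ n) :
    x ∈ T.geomGrowthSubmodule r := by
  refine ⟨max √C ‖x‖, fun n => ?_⟩
  rcases Nat.eq_zero_or_pos n with rfl | hn
  · simp
  have hsq : ‖(T ^ n) x‖ ^ 2 ≤ C * (r ^ n) ^ 2 := by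
    rw [hT.norm_pow_apply_sq, ← pow_mul, mul_comm n]
    exact h _ (by omega)
  calc ‖(T ^ n) x‖ ≤ √(C * (r ^ n) ^ 2) := Real.le_sqrt_of_sq_le hsq
    _ = √C * r ^ n := by rw [Real.sqrt_mul' C (by positivity), Real.sqrt_sq (by positivity)]
    _ ≤ max √C ‖x‖ * r ^ n := by gcongr; exact le_max_left _ _

end IsSelfAdjoint

theorem norm_le_of_cyclic_growth_general (T : H →L[ℂ] H) (hT : T.IsPositive)
    (ξ : H) (C r : ℝ) (hr : 0 ≤ r)
    (hbound : ∀ n : ℕ, 1 ≤ n → (⟪(T ^ n) ξ, ξ⟫).re ≤ C * r ^ n)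
    (hcyclic : Dense ((Submodule.span ℂ (Set.range fun n : ℕ => (T ^ n) ξ) : Submodule ℂ H) :
      Set H)) :
    ‖T‖ ≤ r := by
  have hsa := hT.isSelfAdjoint
  have hξ : ξ ∈ T.geomGrowthSubmodule r :=
    hsa.mem_geomGrowthSubmodule_of_re_inner_pow_le hr (by simpa using hbound)
  have hspan : Submodule.span ℂ (Set.range fun n : ℕ => (T ^ n) ξ) ≤ T.geomGrowthSubmodule r :=
    Submodule.span_le.2 <| Set.range_subset_iff.2 (T.pow_apply_mem_geomGrowthSubmodule hξ)
  refine T.opNorm_le_bound hr fun x => hcyclic.induction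
    (fun y hy => hsa.norm_apply_le_of_mem_geomGrowthSubmodule hr (hspan hy))
    (isClosed_le (by fun_prop) (by fun_prop)) x

/-- If `T ≥ 0` is a bounded self-adjoint operator, `ξ` is a cyclic vector for
`T`, and `⟨Tⁿ ξ, ξ⟩ ≤ C rⁿ` for all `n ≥ 1`, then `‖T‖ ≤ r`. -/
theorem norm_le_of_cyclic_growth (T : H →L[ℂ] H) (hT : T.IsPositive)
    (ξ : H) (C r : ℝ) (hC : 0 ≤ C) (hr : 0 ≤ r)
    (hbound : ∀ n : ℕ, 1 ≤ n → (⟪(T ^ n) ξ, ξ⟫).re ≤ C * r ^ n)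
    (hcyclic : Dense ((Submodule.span ℂ (Set.range fun n : ℕ => (T ^ n) ξ) : Submodule ℂ H) :
      Set H)) :
    ‖T‖ ≤ r :=
  norm_le_of_cyclic_growth_general T hT ξ C r hr hbound hcyclic

end
end

section
/- Let V be a finite-dimensional subspace of C(K), for K a compact group with normalized Haar measure, such that V is invariant under all left translations. Then every v ∈ V satisfies ‖v‖_∞ ≤ (dim V)^{1/2} ‖v‖_{L²(K)}. -/
/-!
Transport `V` into `L²(ν)`, where it becomes a finite-dimensional Hilbert space, and let `ev k` be
the evaluation functional at `k`. Left translation acts on `V` by `L²`-isometries and intertwines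
`ev (g⁻¹ * k)` with `ev k`, so `‖ev k‖` does not depend on `k`. Expanding in an orthonormal basis
`(eᵢ)`, `‖ev k‖² = ∑ᵢ |eᵢ k|²` integrates to `dim V`; with `ν` a probability measure this forces
`‖ev k‖² = dim V`, and `|v k| ≤ ‖ev k‖ ‖v‖₂` is the claim.
-/

open MeasureTheory

noncomputable section

namespace ContinuousMap

variable {α 𝕜 E : Type*} [TopologicalSpace α] [CompactSpace α] [MeasurableSpace α] [BorelSpace α]
  [RCLike 𝕜] [NormedAddCommGroup E] [InnerProductSpace 𝕜 E] [SecondCountableTopologyEither α E]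

theorem norm_toLp_two_sq (μ : Measure α) [IsFiniteMeasure μ] (f : C(α, E)) :
    ‖toLp 2 μ 𝕜 f‖ ^ 2 = ∫ a, ‖f a‖ ^ 2 ∂μ := by
  have h := inner_self_eq_norm_sq_to_K (𝕜 := 𝕜) (toLp 2 μ 𝕜 f)
  rw [L2.inner_def, integral_congr_ae ((coeFn_toLp μ f).mono fun a ha => by
    rw [ha, inner_self_eq_norm_sq_to_K, ← RCLike.ofReal_pow]), integral_ofReal] at h
  exact_mod_cast h.symm

theorem norm_toLp_two_comp_mulLeft {G : Type*} [Group G] [TopologicalSpace G] [ContinuousMul G]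
    [CompactSpace G] [MeasurableSpace G] [BorelSpace G] [SecondCountableTopologyEither G E]
    (μ : Measure G) [IsFiniteMeasure μ] [μ.IsMulLeftInvariant] (f : C(G, E)) (g : G) :
    ‖toLp 2 μ 𝕜 (f.comp (Homeomorph.mulLeft g : C(G, G)))‖ = ‖toLp 2 μ 𝕜 f‖ := by
  refine (pow_left_inj₀ (norm_nonneg _) (norm_nonneg _) two_ne_zero).1 ?_
  rw [norm_toLp_two_sq, norm_toLp_two_sq]
  exact integral_mul_left_eq_self (fun a => ‖f a‖ ^ 2) g

end ContinuousMap

theorem OrthonormalBasis.sq_norm_dual {ι 𝕜 E : Type*} [Fintype ι] [RCLike 𝕜]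
    [NormedAddCommGroup E] [InnerProductSpace 𝕜 E] (b : OrthonormalBasis ι 𝕜 E)
    (L : StrongDual 𝕜 E) : ‖L‖ ^ 2 = ∑ i, ‖L (b i)‖ ^ 2 := by
  have := b.toBasis.finiteDimensional_of_finite
  have := FiniteDimensional.complete 𝕜 E
  simp_rw [← (InnerProductSpace.toDual 𝕜 E).symm.norm_map, ← b.sum_sq_norm_inner_left,
    InnerProductSpace.toDual_symm_apply]

namespace Submodule

section CompactSpace

variable {K 𝕜 : Type*} [TopologicalSpace K] [CompactSpace K] [MeasurableSpace K] [BorelSpace K]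
  [RCLike 𝕜] (ν : Measure K) [IsFiniteMeasure ν] [ν.IsOpenPosMeasure] (V : Submodule 𝕜 C(K, 𝕜))

abbrev l2Image : Submodule 𝕜 (Lp 𝕜 2 ν) :=
  V.map (ContinuousMap.toLp (E := 𝕜) 2 ν 𝕜 : C(K, 𝕜) →ₗ[𝕜] Lp 𝕜 2 ν)

def toL2Equiv : V ≃ₗ[𝕜] V.l2Image ν :=
  V.equivMapOfInjective _ (ContinuousMap.toLp_injective ν)

@[simp]
theorem coe_toL2Equiv (u : V) : (V.toL2Equiv ν u : Lp 𝕜 2 ν) = ContinuousMap.toLp 2 ν 𝕜 u :=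
  rfl

variable [FiniteDimensional 𝕜 V]

def evalL2 (k : K) : StrongDual 𝕜 (V.l2Image ν) :=
  LinearMap.toContinuousLinearMap <|
    (ContinuousMap.evalCLM 𝕜 k).toLinearMap ∘ₗ V.subtype ∘ₗ (V.toL2Equiv ν).symm.toLinearMap

theorem evalL2_apply (k : K) (x : V.l2Image ν) :
    V.evalL2 ν k x = ((V.toL2Equiv ν).symm x : C(K, 𝕜)) k :=
  rfl

@[simp]
theorem evalL2_toL2Equiv (k : K) (u : V) : V.evalL2 ν k (V.toL2Equiv ν u) = (u : C(K, 𝕜)) k := by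
  rw [evalL2_apply, LinearEquiv.symm_apply_apply]

theorem norm_apply_le_norm_evalL2_mul {v : C(K, 𝕜)} (hv : v ∈ V) (k : K) :
    ‖v k‖ ≤ ‖V.evalL2 ν k‖ * ‖ContinuousMap.toLp 2 ν 𝕜 v‖ := by
  simpa using (V.evalL2 ν k).le_opNorm (V.toL2Equiv ν ⟨v, hv⟩)

theorem integral_sq_norm_evalL2 : ∫ k, ‖V.evalL2 ν k‖ ^ 2 ∂ν = Module.finrank 𝕜 V := by
  let b := stdOrthonormalBasis 𝕜 (V.l2Image ν)
  let u i : C(K, 𝕜) := (V.toL2Equiv ν).symm (b i)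
  have hu i : ContinuousMap.toLp 2 ν 𝕜 (u i) = b i := by
    rw [← coe_toL2Equiv, LinearEquiv.apply_symm_apply]
  calc ∫ k, ‖V.evalL2 ν k‖ ^ 2 ∂ν = ∫ k, ∑ i, ‖u i k‖ ^ 2 ∂ν := by
        simp_rw [b.sq_norm_dual, evalL2_apply]
        rfl
    _ = ∑ i, ∫ k, ‖u i k‖ ^ 2 ∂ν := integral_finsetSum _ fun i _ =>
        (by fun_prop : Continuous fun k => ‖u i k‖ ^ 2).integrable_of_hasCompactSupport
          (HasCompactSupport.of_compactSpace _)
    _ = ∑ i, ‖b i‖ ^ 2 := by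
        simp_rw [← ContinuousMap.norm_toLp_two_sq (𝕜 := 𝕜), hu, Submodule.norm_coe]
    _ = Module.finrank 𝕜 V := by
        simp only [b.orthonormal.1, one_pow, Finset.sum_const, Finset.card_univ, Fintype.card_fin,
          nsmul_eq_mul, mul_one, (V.toL2Equiv ν).finrank_eq]

end CompactSpace

section Group

variable {K 𝕜 : Type*} [Group K] [TopologicalSpace K] [ContinuousMul K] [CompactSpace K]
  [MeasurableSpace K] [BorelSpace K] [RCLike 𝕜] (ν : Measure K) [ν.IsMulLeftInvariant]
  [ν.IsOpenPosMeasure] {V : Submodule 𝕜 C(K, 𝕜)} [FiniteDimensional 𝕜 V]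

theorem norm_evalL2_inv_mul_le [IsFiniteMeasure ν]
    (hV : ∀ g : K, ∀ v ∈ V, v.comp (Homeomorph.mulLeft g⁻¹ : C(K, K)) ∈ V) (g k : K) :
    ‖V.evalL2 ν (g⁻¹ * k)‖ ≤ ‖V.evalL2 ν k‖ := by
  refine ContinuousLinearMap.opNorm_le_bound _ (by positivity) fun x => ?_
  set u := (V.toL2Equiv ν).symm x
  let y : V := ⟨(u : C(K, 𝕜)).comp (Homeomorph.mulLeft g⁻¹ : C(K, K)), hV g u u.2⟩
  have hy : ‖V.toL2Equiv ν y‖ = ‖x‖ := by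
    rw [← Submodule.norm_coe, coe_toL2Equiv, ContinuousMap.norm_toLp_two_comp_mulLeft,
      ← coe_toL2Equiv, LinearEquiv.apply_symm_apply, Submodule.norm_coe]
  calc ‖V.evalL2 ν (g⁻¹ * k) x‖ = ‖V.evalL2 ν k (V.toL2Equiv ν y)‖ := by
        rw [evalL2_toL2Equiv, evalL2_apply]
        rfl
    _ ≤ ‖V.evalL2 ν k‖ * ‖x‖ := hy ▸ (V.evalL2 ν k).le_opNorm _

theorem norm_evalL2_eq_sqrt_finrank [IsProbabilityMeasure ν]
    (hV : ∀ g : K, ∀ v ∈ V, v.comp (Homeomorph.mulLeft g⁻¹ : C(K, K)) ∈ V) (k : K) :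
    ‖V.evalL2 ν k‖ = √(Module.finrank 𝕜 V) := by
  have hconst (k : K) : ‖V.evalL2 ν k‖ = ‖V.evalL2 ν 1‖ :=
    le_antisymm (by simpa using norm_evalL2_inv_mul_le ν hV k⁻¹ 1)
      (by simpa using norm_evalL2_inv_mul_le ν hV k k)
  have h := V.integral_sq_norm_evalL2 ν
  simp_rw [hconst, integral_const, probReal_univ, one_smul] at h
  rw [hconst, ← h, Real.sqrt_sq (by positivity)]

end Group

end Submodule

/-- If `V` is a finite-dimensional left-translation-invariant subspace of
`C(K)` for a compact group `K` with normalized Haar measure, then every `v ∈ V` satisfies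
`‖v‖_∞ ≤ (dim V)^{1/2} ‖v‖_{L²(K)}`. -/
theorem sup_le_sqrt_dim_mul_L2 {K : Type*} [Group K] [TopologicalSpace K]
    [IsTopologicalGroup K] [CompactSpace K] [MeasurableSpace K] [BorelSpace K]
    (ν : Measure K) [ν.IsHaarMeasure] [IsProbabilityMeasure ν]
    (V : Submodule ℂ C(K, ℂ)) [FiniteDimensional ℂ V]
    (hinv : ∀ g : K, ∀ v ∈ V,
      ContinuousMap.comp v ((Homeomorph.mulLeft g⁻¹ : K ≃ₜ K) : C(K, K)) ∈ V)
    (v : C(K, ℂ)) (hv : v ∈ V) :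
    ‖v‖ ≤ Real.sqrt (Module.finrank ℂ V) * Real.sqrt (∫ k, ‖v k‖ ^ 2 ∂ν) := by
  refine (ContinuousMap.norm_le _ (by positivity)).2 fun k => ?_
  calc ‖v k‖ ≤ ‖V.evalL2 ν k‖ * ‖ContinuousMap.toLp 2 ν ℂ v‖ :=
        V.norm_apply_le_norm_evalL2_mul ν hv k
    _ = _ := by
        rw [Submodule.norm_evalL2_eq_sqrt_finrank ν hinv, ← ContinuousMap.norm_toLp_two_sq (𝕜 := ℂ),
          Real.sqrt_sq (norm_nonneg _)]

end
end

section
/- Let G be a semisimple Lie group with Weyl group W acting on a*, and suppose μ ∈ a* and λ ∈ conv(Wμ), the convex hull of the Weyl orbit of μ. Then φ_λ(g) ≤ φ_μ(g) for all g ∈ G, where φ_ν denotes the Harish-Chandra spherical function with parameter ν. -/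
/-! Since `exp` is convex and `ξ ↦ -(ξ - ρ)(H)` is affine, the integrand of `φ_ξ(g)` is convex
in `ξ` for each `k`, hence so is `ξ ↦ φ_ξ(g)`. By the maximum principle for convex functions,
`φ_λ(g)` is then bounded by `φ_{w μ₀}(g)` for some `w ∈ W`, which is `φ_{μ₀}(g)` by Weyl
invariance. -/

open MeasureTheory

noncomputable section

variable {G : Type*} [Group G] [TopologicalSpace G] [IsTopologicalGroup G]
  [MeasurableSpace G] [BorelSpace G]
  {𝔞 : Type*} [AddCommGroup 𝔞] [Module ℝ 𝔞] [TopologicalSpace 𝔞]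

/-- The Harish-Chandra spherical function with real parameter `ξ`:
`φ_ξ(g) = ∫_K e^{-(ξ-ρ)(H(g⁻¹k))} dk`, where `Hmap` is the Iwasawa projection. -/
def sph (K : Subgroup G) (ν : Measure K) (Hmap : G → 𝔞) (ρ : 𝔞 →L[ℝ] ℝ)
    (ξ : 𝔞 →L[ℝ] ℝ) (g : G) : ℝ :=
  ∫ k : K, Real.exp (-(ξ (Hmap (g⁻¹ * ↑k)) - ρ (Hmap (g⁻¹ * ↑k)))) ∂ν

theorem convexOn_exp_neg_apply_sub_const (v : 𝔞) (c : ℝ) :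
    ConvexOn ℝ Set.univ fun ξ : 𝔞 →L[ℝ] ℝ => Real.exp (-(ξ v - c)) := by
  let ev : (𝔞 →L[ℝ] ℝ) →ₗ[ℝ] ℝ :=
    LinearMap.applyₗ v ∘ₗ ContinuousLinearMap.coeLM ℝ
  exact convexOn_exp.comp_affineMap (-(ev.toAffineMap - AffineMap.const ℝ _ c))

theorem convexOn_integral_exp_neg_apply_sub {X : Type*} [TopologicalSpace X]
    [CompactSpace X] [MeasurableSpace X] [OpensMeasurableSpace X]
    (ν : Measure X) [IsFiniteMeasure ν]
    {f : X → 𝔞} {c : X → ℝ} (hf : Continuous f) (hc : Continuous c) :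
    ConvexOn ℝ Set.univ fun ξ : 𝔞 →L[ℝ] ℝ => ∫ x, Real.exp (-(ξ (f x) - c x)) ∂ν :=
  integral_convexOn_of_integrand_ae convex_univ
    (ae_of_all _ fun x => convexOn_exp_neg_apply_sub_const (f x) (c x))
    fun ξ _ => Continuous.integrable_of_hasCompactSupport
      (Real.continuous_exp.comp ((ξ.continuous.comp hf).sub hc).neg) (.of_compactSpace _)

theorem spherical_mono_convexHull_general
    (K : Subgroup G) [CompactSpace K] (ν : Measure K)
    [IsProbabilityMeasure ν]
    (Hmap : G → 𝔞) (ρ : 𝔞 →L[ℝ] ℝ)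
    (hH : ∀ g : G, Continuous fun k : K => Hmap (g⁻¹ * ↑k))
    (W : Finset ((𝔞 →L[ℝ] ℝ) →ₗ[ℝ] (𝔞 →L[ℝ] ℝ)))
    (mu0 lam : 𝔞 →L[ℝ] ℝ)
    (hWinv : ∀ w ∈ W, ∀ g : G, sph K ν Hmap ρ (w mu0) g = sph K ν Hmap ρ mu0 g)
    (hconv : lam ∈ convexHull ℝ ((fun w : (𝔞 →L[ℝ] ℝ) →ₗ[ℝ] (𝔞 →L[ℝ] ℝ) => w mu0) '' (W : Set ((𝔞 →L[ℝ] ℝ) →ₗ[ℝ] (𝔞 →L[ℝ] ℝ))))) :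
    ∀ g : G, sph K ν Hmap ρ lam g ≤ sph K ν Hmap ρ mu0 g := by
  intro g
  have hconvex : ConvexOn ℝ Set.univ fun ξ => sph K ν Hmap ρ ξ g :=
    convexOn_integral_exp_neg_apply_sub ν (hH g) (ρ.continuous.comp (hH g))
  obtain ⟨_, ⟨w, hw, rfl⟩, hle⟩ :=
    hconvex.exists_ge_of_mem_convexHull (Set.subset_univ _) hconv
  exact hle.trans_eq (hWinv w hw g)

/-- If `W` is the (finite) Weyl group acting on `𝔞*` (spherical functions
being `W`-invariant in their parameter), `μ₀ ∈ 𝔞*` and `λ ∈ conv(W μ₀)`, then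
`φ_λ(g) ≤ φ_{μ₀}(g)` for all `g ∈ G`. -/
theorem spherical_mono_convexHull
    (K : Subgroup G) [CompactSpace K] (ν : Measure K) [ν.IsHaarMeasure]
    [IsProbabilityMeasure ν]
    (Hmap : G → 𝔞) (ρ : 𝔞 →L[ℝ] ℝ)
    (hH : ∀ g : G, Continuous fun k : K => Hmap (g⁻¹ * ↑k))
    (W : Finset ((𝔞 →L[ℝ] ℝ) →ₗ[ℝ] (𝔞 →L[ℝ] ℝ)))
    (mu0 lam : 𝔞 →L[ℝ] ℝ)
    (hWinv : ∀ w ∈ W, ∀ g : G, sph K ν Hmap ρ (w mu0) g = sph K ν Hmap ρ mu0 g)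
    (hconv : lam ∈ convexHull ℝ ((fun w : (𝔞 →L[ℝ] ℝ) →ₗ[ℝ] (𝔞 →L[ℝ] ℝ) => w mu0) '' (W : Set ((𝔞 →L[ℝ] ℝ) →ₗ[ℝ] (𝔞 →L[ℝ] ℝ))))) :
    ∀ g : G, sph K ν Hmap ρ lam g ≤ sph K ν Hmap ρ mu0 g :=
  spherical_mono_convexHull_general K ν Hmap ρ hH W mu0 lam hWinv hconv
end
end
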